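/- arXiv:2108.05146 — 4 statements merged into one kernel-verified Lean document; each statement's English description precedes it below -/
import Mathlib

section
/- Let {s_n} and {ε_n} be sequences of nonnegative reals, {δ_n} ⊆ [0,1], and {r_n} a real sequence with s_{n+1} ≤ (1-δ_n)s_n + δ_n r_n + ε_n for all n. If Σδ_n = ∞, Σε_n < ∞, and limsup r_n ≤ 0, then s_n → 0. -/
open Filter

theorem xu_lemma_convergence
    (s ε δ r : ℕ → ℝ)
    (hs : ∀ n, 0 ≤ s n) (hε : ∀ n, 0 ≤ ε n)
    (hδ : ∀ n, δ n ∈ Set.Icc (0 : ℝ) 1)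
    (hrec : ∀ n, s (n + 1) ≤ (1 - δ n) * s n + δ n * r n + ε n)
    (hδsum : ¬ Summable δ)
    (hεsum : Summable ε)
    (hr : limsup (fun n => (r n : EReal)) atTop ≤ 0) :
    Tendsto s atTop (nhds 0) := by
  rw [Metric.tendsto_atTop]
  intro η hη
  set η' := η / 4 with hη'def
  have hη'pos : 0 < η' := by positivity
  -- Step 1: eventually r n < η'
  have h1 : ∀ᶠ n in atTop, r n < η' := by
    have hlt : limsup (fun n => (r n : EReal)) atTop < (η' : EReal) := by
      refine lt_of_le_of_lt hr ?_
      exact_mod_cast hη'pos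
    have := eventually_lt_of_limsup_lt hlt
    filter_upwards [this] with n hn
    exact_mod_cast hn
  obtain ⟨N1, hN1⟩ := eventually_atTop.mp h1
  -- Step 2: small tails of ε
  have h2 : Tendsto (fun i => ∑' k, ε (k + i)) atTop (nhds 0) :=
    tendsto_sum_nat_add ε
  obtain ⟨N2, hN2⟩ := eventually_atTop.mp (h2.eventually (gt_mem_nhds hη'pos))
  set N := max N1 N2 with hNdef
  have hNr : ∀ m, N ≤ m → r m < η' := fun m hm => hN1 m (le_trans (le_max_left _ _) hm)
  have htail : ∀ m, ∑ k ∈ Finset.Ico N m, ε k < η' := by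
    intro m
    have h1 : ∑ k ∈ Finset.Ico N m, ε k = ∑ j ∈ Finset.range (m - N), ε (N + j) :=
      Finset.sum_Ico_eq_sum_range ε N m
    have h2 : ∑ j ∈ Finset.range (m - N), ε (N + j) ≤ ∑' k, ε (k + N) := by
      have hsum : Summable (fun k => ε (k + N)) := (summable_nat_add_iff N).2 hεsum
      have := Summable.sum_le_tsum (Finset.range (m - N)) (fun i _ => hε (i + N)) hsum
      calc ∑ j ∈ Finset.range (m - N), ε (N + j)
          = ∑ j ∈ Finset.range (m - N), ε (j + N) := by
            refine Finset.sum_congr rfl fun j _ => by rw [add_comm]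
        _ ≤ ∑' k, ε (k + N) := this
    have h3 : ∑' k, ε (k + N) < η' := hN2 N (le_max_right _ _)
    linarith
  -- Key induction
  have key : ∀ m, N ≤ m →
      s m ≤ η' + (∏ k ∈ Finset.Ico N m, (1 - δ k)) * s N + ∑ k ∈ Finset.Ico N m, ε k := by
    intro m hm
    induction m, hm using Nat.le_induction with
    | base =>
      simp only [Finset.Ico_self, Finset.prod_empty, Finset.sum_empty, one_mul, add_zero]
      linarith
    | succ m hm ih =>
      have hδm := hδ m
      have hδm0 : 0 ≤ δ m := hδm.1
      have hδm1 : δ m ≤ 1 := hδm.2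
      have hE : 0 ≤ ∑ k ∈ Finset.Ico N m, ε k := Finset.sum_nonneg fun k _ => hε k
      have hrm : r m < η' := hNr m hm
      have hprod : ∏ k ∈ Finset.Ico N (m + 1), (1 - δ k)
          = (∏ k ∈ Finset.Ico N m, (1 - δ k)) * (1 - δ m) :=
        Finset.prod_Ico_succ_top (by omega) _
      have hsum : ∑ k ∈ Finset.Ico N (m + 1), ε k
          = (∑ k ∈ Finset.Ico N m, ε k) + ε m :=
        Finset.sum_Ico_succ_top (by omega) _
      have step1 : s (m + 1) ≤ (1 - δ m) * s m + δ m * r m + ε m := hrec m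
      have step2 : (1 - δ m) * s m ≤ (1 - δ m) * (η' + (∏ k ∈ Finset.Ico N m, (1 - δ k)) * s N + ∑ k ∈ Finset.Ico N m, ε k) :=
        mul_le_mul_of_nonneg_left ih (by linarith)
      have step3 : δ m * r m ≤ δ m * η' := mul_le_mul_of_nonneg_left hrm.le hδm0
      rw [hprod, hsum]
      nlinarith [mul_nonneg hδm0 hE]
  -- Product bound by exponential
  have hPexp : ∀ m, (∏ k ∈ Finset.Ico N m, (1 - δ k))
      ≤ Real.exp (-(∑ k ∈ Finset.Ico N m, δ k)) := by
    intro m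
    have : ∀ k ∈ Finset.Ico N m, (1 - δ k) ≤ Real.exp (-(δ k)) := by
      intro k _
      have := Real.add_one_le_exp (-(δ k))
      linarith
    calc ∏ k ∈ Finset.Ico N m, (1 - δ k)
        ≤ ∏ k ∈ Finset.Ico N m, Real.exp (-(δ k)) := by
          refine Finset.prod_le_prod (fun k _ => ?_) this
          have := (hδ k).2; linarith
      _ = Real.exp (∑ k ∈ Finset.Ico N m, -(δ k)) := (Real.exp_sum _ _).symm
      _ = Real.exp (-(∑ k ∈ Finset.Ico N m, δ k)) := by rw [Finset.sum_neg_distrib]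
  -- The Ico sums of δ tend to infinity
  have hT : Tendsto (fun m => ∑ k ∈ Finset.Ico N m, δ k) atTop atTop := by
    have hS : Tendsto (fun n => ∑ i ∈ Finset.range n, δ i) atTop atTop :=
      (not_summable_iff_tendsto_nat_atTop_of_nonneg (fun n => (hδ n).1)).1 hδsum
    have hS' : Tendsto (fun n => (∑ i ∈ Finset.range n, δ i) - ∑ i ∈ Finset.range N, δ i)
        atTop atTop := tendsto_atTop_add_const_right atTop _ hS
    refine hS'.congr' ?_
    filter_upwards [eventually_ge_atTop N] with m hm
    rw [sub_eq_iff_eq_add, ← Finset.sum_range_add_sum_Ico δ hm]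
    ring
  have hexp : Tendsto (fun m => Real.exp (-(∑ k ∈ Finset.Ico N m, δ k)) * s N)
      atTop (nhds 0) := by
    have : Tendsto (fun m => Real.exp (-(∑ k ∈ Finset.Ico N m, δ k))) atTop (nhds 0) :=
      Real.tendsto_exp_atBot.comp (tendsto_neg_atTop_atBot.comp hT)
    simpa using this.mul_const (s N)
  obtain ⟨N3, hN3⟩ := eventually_atTop.mp (hexp.eventually (gt_mem_nhds hη'pos))
  refine ⟨max N N3, fun m hm => ?_⟩
  have hmN : N ≤ m := le_trans (le_max_left _ _) hm
  have hmN3 : N3 ≤ m := le_trans (le_max_right _ _) hm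
  have h4 : (∏ k ∈ Finset.Ico N m, (1 - δ k)) * s N
      ≤ Real.exp (-(∑ k ∈ Finset.Ico N m, δ k)) * s N :=
    mul_le_mul_of_nonneg_right (hPexp m) (hs N)
  have h5 := hN3 m hmN3
  have h6 := htail m
  have h7 := key m hmN
  rw [Real.dist_eq, sub_zero, abs_of_nonneg (hs m)]
  have : s m < 3 * η' := by linarith
  rw [hη'def] at this
  linarith
end

section
/- Let {Φ_n} be a sequence of real numbers such that there exists a subsequence {Φ_{n_i}} with Φ_{n_i} < Φ_{n_i + 1} for all i. Define for n ≥ n_0, τ(n) := max{l ≤ n : Φ_l < Φ_{l+1}}. Then τ is nondecreasing with τ(n) → ∞, and for all n ≥ n_0, Φ_{τ(n)} ≤ Φ_{τ(n)+1} and Φ_n ≤ Φ_{τ(n)+1}. -/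
open Filter

theorem mainge_lemma
    (Φ : ℕ → ℝ) (n₀ : ℕ) (nk : ℕ → ℕ) (hnk : StrictMono nk)
    (hsub : ∀ i, Φ (nk i) < Φ (nk i + 1))
    (hne : ∀ n, n₀ ≤ n → ∃ l, l ≤ n ∧ Φ l < Φ (l + 1))
    (τ : ℕ → ℕ)
    (hτ : ∀ n, n₀ ≤ n → IsGreatest {l | l ≤ n ∧ Φ l < Φ (l + 1)} (τ n)) :
    (∀ m n, n₀ ≤ m → m ≤ n → τ m ≤ τ n) ∧
    Tendsto τ atTop atTop ∧
    (∀ n, n₀ ≤ n → Φ (τ n) ≤ Φ (τ n + 1)) ∧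
    (∀ n, n₀ ≤ n → Φ n ≤ Φ (τ n + 1)) := by
  refine ⟨?_, ?_, ?_, ?_⟩
  · intro m n hm hmn
    exact (hτ n (hm.trans hmn)).2 ⟨(hτ m hm).1.1.trans hmn, (hτ m hm).1.2⟩
  · rw [tendsto_atTop]
    intro b
    filter_upwards [eventually_ge_atTop (max n₀ (nk b))] with n hn
    have hn₀ : n₀ ≤ n := le_trans (le_max_left _ _) hn
    have hb : nk b ≤ τ n := (hτ n hn₀).2 ⟨le_trans (le_max_right _ _) hn, hsub b⟩
    exact le_trans hnk.le_apply hb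
  · intro n hn
    exact ((hτ n hn).1.2).le
  · intro n hn
    have key : ∀ m, τ n ≤ m → m ≤ n → Φ m ≤ Φ (τ n + 1) := by
      intro m
      induction m with
      | zero =>
        intro h1 _
        have h0 : τ n = 0 := Nat.le_zero.mp h1
        rw [← h0]
        exact ((hτ n hn).1.2).le
      | succ m ih =>
        intro h1 h2
        rcases Nat.lt_or_ge m (τ n) with h | h
        · have he : τ n = m + 1 := le_antisymm h1 h
          rw [← he]
          exact ((hτ n hn).1.2).le
        · have hm : Φ m ≤ Φ (τ n + 1) := ih h (Nat.le_of_succ_le h2)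
          rcases eq_or_lt_of_le h with he | hlt
          · rw [← he]
          · have hnlt : ¬ (Φ m < Φ (m + 1)) := fun hc =>
              absurd ((hτ n hn).2 ⟨Nat.le_of_succ_le h2, hc⟩) (not_le.mpr hlt)
            exact le_trans (not_lt.mp hnlt) hm
    rcases eq_or_lt_of_le (hτ n hn).1.1 with he | h
    · have h2 := (hτ n hn).1.2
      rw [he] at h2 ⊢
      exact h2.le
    · exact key n h.le le_rfl
end

section
/- A monotone operator A : H → 2^H on a real Hilbert space is maximal monotone if and only if the range of I + A is all of H. -/
open RealInnerProductSpace Filter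

/-- A set-valued operator is monotone. -/
def MonotoneOp {H : Type*} [NormedAddCommGroup H] [InnerProductSpace ℝ H]
    (B : H → Set H) : Prop :=
  ∀ x y u v, u ∈ B x → v ∈ B y → 0 ≤ (inner ℝ (u - v) (x - y) : ℝ)

/-- A set-valued operator is maximal monotone. -/
def MaximalMonotoneOp {H : Type*} [NormedAddCommGroup H] [InnerProductSpace ℝ H]
    (B : H → Set H) : Prop :=
  MonotoneOp B ∧
    ∀ x u, (∀ y v, v ∈ B y → 0 ≤ (inner ℝ (u - v) (x - y) : ℝ)) → u ∈ B x

section MintyAux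

variable {H : Type*} [NormedAddCommGroup H] [InnerProductSpace ℝ H]

/-- The affine (in `(x,u)`) function whose supremum over the graph is the
Fitzpatrick function. -/
noncomputable def mintyA (x u y v : H) : ℝ := ⟪u, y⟫ + ⟪v, x⟫ - ⟪v, y⟫

/-- The set of values of `mintyA x u` over the graph of `A`. -/
def mintyS (A : H → Set H) (x u : H) : Set ℝ :=
  {r | ∃ y v, v ∈ A y ∧ r = mintyA x u y v}

/-- The Fitzpatrick function. -/
noncomputable def mintyF (A : H → Set H) (x u : H) : ℝ := sSup (mintyS A x u)

noncomputable def mintyQ (x u : H) : ℝ := ‖x‖ ^ 2 / 2 + ‖u‖ ^ 2 / 2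

noncomputable def mintyH (A : H → Set H) (x u : H) : ℝ := mintyF A x u + mintyQ x u

lemma mintyA_eq (x u y v : H) : mintyA x u y v = ⟪x, u⟫ - ⟪u - v, x - y⟫ := by
  unfold mintyA
  rw [inner_sub_left, inner_sub_right, inner_sub_right, real_inner_comm x u]
  ring

lemma mintyA_combo (t : ℝ) (x u x' u' y v : H) :
    mintyA ((1 - t) • x + t • x') ((1 - t) • u + t • u') y v
      = (1 - t) * mintyA x u y v + t * mintyA x' u' y v := by
  unfold mintyA
  rw [inner_add_left, real_inner_smul_left, real_inner_smul_left,
    inner_add_right, real_inner_smul_right, real_inner_smul_right]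
  ring

lemma minty_par (x x' : H) :
    ‖(2:ℝ)⁻¹ • (x + x')‖ ^ 2 = ‖x‖ ^ 2 / 2 + ‖x'‖ ^ 2 / 2 - ‖x - x'‖ ^ 2 / 4 := by
  have h0 : ‖(2:ℝ)⁻¹‖ = 2⁻¹ := by norm_num [Real.norm_eq_abs]
  rw [norm_smul, h0, mul_pow]
  have h1 := norm_add_sq_real x x'
  have h2 := norm_sub_sq_real x x'
  nlinarith [h1, h2]

set_option maxHeartbeats 1600000 in
lemma minty_zero {H : Type*} [NormedAddCommGroup H] [InnerProductSpace ℝ H]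
    [CompleteSpace H] (A : H → Set H) (hA : MonotoneOp A)
    (hmax : ∀ x u, (∀ y v, v ∈ A y → 0 ≤ (inner ℝ (u - v) (x - y) : ℝ)) → u ∈ A x) :
    ∃ x, ∃ u ∈ A x, x + u = 0 := by
  -- the graph is nonempty
  obtain ⟨y₀, v₀, hv₀⟩ : ∃ y v, v ∈ A y := by
    by_contra h
    push_neg at h
    exact h 0 0 (hmax 0 0 fun y v hv => absurd hv (h y v))
  have hSne : ∀ x u : H, (mintyS A x u).Nonempty :=
    fun x u => ⟨_, y₀, v₀, hv₀, rfl⟩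
  -- on the graph, S is bounded above by the inner product
  have hbddG : ∀ {x u : H}, u ∈ A x → (⟪x, u⟫ : ℝ) ∈ upperBounds (mintyS A x u) := by
    intro x u hu r hr
    obtain ⟨y, v, hv, rfl⟩ := hr
    rw [mintyA_eq]
    have := hA x y u v hu hv
    linarith
  have hFG : ∀ {x u : H}, u ∈ A x → mintyF A x u = ⟪x, u⟫ := by
    intro x u hu
    refine le_antisymm (csSup_le (hSne x u) (hbddG hu)) (le_csSup ⟨_, hbddG hu⟩ ?_)
    exact ⟨x, u, hu, by rw [mintyA_eq]; simp⟩
  have hFge : ∀ {x u y v : H}, BddAbove (mintyS A x u) → v ∈ A y →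
      mintyA x u y v ≤ mintyF A x u :=
    fun hb hv => le_csSup hb ⟨_, _, hv, rfl⟩
  -- convex combinations
  have hcombo : ∀ (t : ℝ), 0 ≤ t → t ≤ 1 → ∀ x u x' u' : H,
      BddAbove (mintyS A x u) → BddAbove (mintyS A x' u') →
      BddAbove (mintyS A ((1-t) • x + t • x') ((1-t) • u + t • u')) ∧
        mintyF A ((1-t) • x + t • x') ((1-t) • u + t • u')
          ≤ (1-t) * mintyF A x u + t * mintyF A x' u' := by
    intro t ht0 ht1 x u x' u' hb hb'
    have hub : (1-t) * mintyF A x u + t * mintyF A x' u'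
        ∈ upperBounds (mintyS A ((1-t) • x + t • x') ((1-t) • u + t • u')) := by
      rintro r ⟨y, v, hv, rfl⟩
      rw [mintyA_combo]
      have h1 := hFge hb hv
      have h2 := hFge hb' hv
      have h3 : (1-t) * mintyA x u y v ≤ (1-t) * mintyF A x u :=
        mul_le_mul_of_nonneg_left h1 (by linarith)
      have h4 : t * mintyA x' u' y v ≤ t * mintyF A x' u' :=
        mul_le_mul_of_nonneg_left h2 ht0
      linarith
    exact ⟨⟨_, hub⟩, csSup_le (hSne _ _) hub⟩
  -- lower bound for mintyH on bounded points
  have mlb : ∀ x u : H, BddAbove (mintyS A x u) →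
      -(‖y₀ + v₀‖ ^ 2 / 2) ≤ mintyH A x u := by
    intro x u hb
    have h1 : mintyA x u y₀ v₀ ≤ mintyF A x u := hFge hb hv₀
    have h2 := norm_add_sq_real u y₀
    have h3 := norm_add_sq_real x v₀
    have h4 := norm_add_sq_real y₀ v₀
    have h5 : (0:ℝ) ≤ ‖u + y₀‖ ^ 2 := sq_nonneg _
    have h6 : (0:ℝ) ≤ ‖x + v₀‖ ^ 2 := sq_nonneg _
    have h7 : ⟪v₀, x⟫ = ⟪x, v₀⟫ := real_inner_comm _ _
    have h8 : ⟪v₀, y₀⟫ = ⟪y₀, v₀⟫ := real_inner_comm _ _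
    unfold mintyH mintyQ
    unfold mintyA at h1
    nlinarith
  -- the infimum
  set M : Set ℝ := {r | ∃ x u : H, BddAbove (mintyS A x u) ∧ r = mintyH A x u}
    with hM
  have Mne : M.Nonempty := ⟨mintyH A y₀ v₀, y₀, v₀, ⟨_, hbddG hv₀⟩, rfl⟩
  have Mbdd : BddBelow M := by
    refine ⟨-(‖y₀ + v₀‖ ^ 2 / 2), ?_⟩
    rintro r ⟨x, u, hb, rfl⟩
    exact mlb x u hb
  set m : ℝ := sInf M with hm
  have hm_le : ∀ x u : H, BddAbove (mintyS A x u) → m ≤ mintyH A x u :=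
    fun x u hb => csInf_le Mbdd ⟨x, u, hb, rfl⟩
  -- minimizing sequence
  have hseq : ∀ n : ℕ, ∃ q : H × H, BddAbove (mintyS A q.1 q.2) ∧
      mintyH A q.1 q.2 < m + 1 / (n + 1) := by
    intro n
    have hpos : (0:ℝ) < 1 / (n + 1) := by positivity
    obtain ⟨r, hrM, hr⟩ := exists_lt_of_csInf_lt Mne (by linarith : sInf M < m + 1/(n+1))
    obtain ⟨x, u, hb, rfl⟩ := hrM
    exact ⟨(x, u), hb, hr⟩
  choose p hp1 hp2 using hseq
  -- midpoint estimate
  have hmid : ∀ n k : ℕ,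
      ‖(p n).1 - (p k).1‖ ^ 2 + ‖(p n).2 - (p k).2‖ ^ 2
        ≤ 4 * (mintyH A (p n).1 (p n).2 + mintyH A (p k).1 (p k).2 - 2 * m) := by
    intro n k
    have hc := hcombo (1/2) (by norm_num) (by norm_num)
      (p n).1 (p n).2 (p k).1 (p k).2 (hp1 n) (hp1 k)
    have he1 : ((1:ℝ) - 1/2) • (p n).1 + (1/2 : ℝ) • (p k).1
        = (2:ℝ)⁻¹ • ((p n).1 + (p k).1) := by
      rw [smul_add]; norm_num
    have he2 : ((1:ℝ) - 1/2) • (p n).2 + (1/2 : ℝ) • (p k).2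
        = (2:ℝ)⁻¹ • ((p n).2 + (p k).2) := by
      rw [smul_add]; norm_num
    rw [he1, he2] at hc
    obtain ⟨hcb, hcF⟩ := hc
    have hmm := hm_le _ _ hcb
    have hq1 := minty_par (p n).1 (p k).1
    have hq2 := minty_par (p n).2 (p k).2
    unfold mintyH mintyQ at hmm ⊢
    nlinarith [hmm, hcF, hq1, hq2]
  -- distance bound for indices ≥ N
  have hdd : ∀ N : ℕ, ∀ a ≥ N, ∀ b ≥ N,
      ‖(p a).1 - (p b).1‖ ^ 2 + ‖(p a).2 - (p b).2‖ ^ 2 ≤ 8 / (N + 1) := by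
    intro N a ha b hb
    have h1 : mintyH A (p a).1 (p a).2 < m + 1 / (N + 1) := by
      have := hp2 a
      have hle : (1:ℝ) / (a + 1) ≤ 1 / (N + 1) := by
        apply one_div_le_one_div_of_le (by positivity)
        exact_mod_cast by omega
      linarith
    have h2 : mintyH A (p b).1 (p b).2 < m + 1 / (N + 1) := by
      have := hp2 b
      have hle : (1:ℝ) / (b + 1) ≤ 1 / (N + 1) := by
        apply one_div_le_one_div_of_le (by positivity)
        exact_mod_cast by omega
      linarith
    have := hmid a b
    have h8 : 8 / ((N:ℝ) + 1) = 8 * (1 / ((N:ℝ) + 1)) := by ring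
    rw [h8]
    linarith
  -- Cauchy sequences
  have hC : ∀ (f : ℕ → H), (∀ N, ∀ a ≥ N, ∀ b ≥ N, ‖f a - f b‖ ^ 2 ≤ 8 / (N+1)) →
      CauchySeq f := by
    intro f hf
    rw [Metric.cauchySeq_iff]
    intro ε hε
    obtain ⟨N, hN⟩ := exists_nat_gt (8 / ε ^ 2)
    refine ⟨N, fun a ha b hb => ?_⟩
    have h1 := hf N a ha b hb
    have hN1 : 8 / ((N:ℝ) + 1) < ε ^ 2 := by
      rw [div_lt_iff₀ (by positivity)]
      have h8 : 8 / ε ^ 2 < (N:ℝ) + 1 := by linarith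
      calc (8:ℝ) = 8 / ε ^ 2 * ε ^ 2 := by field_simp
        _ < ((N:ℝ) + 1) * ε ^ 2 := by
            exact mul_lt_mul_of_pos_right h8 (by positivity)
        _ = ε ^ 2 * ((N:ℝ) + 1) := by ring
    rw [dist_eq_norm]
    nlinarith [norm_nonneg (f a - f b), hε]
  have hc1 : CauchySeq (fun n => (p n).1) := by
    apply hC
    intro N a ha b hb
    have := hdd N a ha b hb
    nlinarith [sq_nonneg ‖(p a).2 - (p b).2‖]
  have hc2 : CauchySeq (fun n => (p n).2) := by
    apply hC
    intro N a ha b hb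
    have := hdd N a ha b hb
    nlinarith [sq_nonneg ‖(p a).1 - (p b).1‖]
  obtain ⟨xb, hxb⟩ := cauchySeq_tendsto_of_complete hc1
  obtain ⟨ub, hub⟩ := cauchySeq_tendsto_of_complete hc2
  -- limit bound: for every graph point, the affine value + quadratic ≤ m
  have hbar_le : ∀ y v : H, v ∈ A y → mintyA xb ub y v + mintyQ xb ub ≤ m := by
    intro y v hv
    have ht : Tendsto (fun n => mintyA (p n).1 (p n).2 y v + mintyQ (p n).1 (p n).2)
        atTop (nhds (mintyA xb ub y v + mintyQ xb ub)) := by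
      unfold mintyA mintyQ
      exact (((hub.inner tendsto_const_nhds).add
        (tendsto_const_nhds.inner hxb)).sub tendsto_const_nhds).add
        ((((hxb.norm.pow 2).div_const 2)).add ((hub.norm.pow 2).div_const 2))
    have hg : Tendsto (fun n : ℕ => m + 1 / ((n:ℝ) + 1)) atTop (nhds m) := by
      have := tendsto_one_div_add_atTop_nhds_zero_nat (𝕜 := ℝ)
      simpa using tendsto_const_nhds.add this
    refine le_of_tendsto_of_tendsto' ht hg ?_
    intro n
    have h1 : mintyA (p n).1 (p n).2 y v ≤ mintyF A (p n).1 (p n).2 :=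
      hFge (hp1 n) hv
    have h2 := hp2 n
    unfold mintyH at h2
    push_cast
    linarith
  have hbdd_bar : BddAbove (mintyS A xb ub) := by
    refine ⟨m - mintyQ xb ub, ?_⟩
    rintro r ⟨y, v, hv, rfl⟩
    linarith [hbar_le y v hv]
  have hFbar_le : mintyF A xb ub + mintyQ xb ub ≤ m := by
    have : mintyF A xb ub ≤ m - mintyQ xb ub := by
      apply csSup_le (hSne xb ub)
      rintro r ⟨y, v, hv, rfl⟩
      linarith [hbar_le y v hv]
    linarith
  -- maximality lower bound on F
  have hFbar_ge : ⟪xb, ub⟫ ≤ mintyF A xb ub := by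
    by_contra hlt
    push_neg at hlt
    have hmem : ub ∈ A xb := by
      apply hmax
      intro y v hv
      have h1 : mintyA xb ub y v ≤ mintyF A xb ub := hFge hbdd_bar hv
      rw [mintyA_eq] at h1
      linarith
    have : (⟪xb, ub⟫ : ℝ) ≤ mintyF A xb ub :=
      le_csSup hbdd_bar ⟨xb, ub, hmem, by rw [mintyA_eq]; simp⟩
    linarith
  -- subgradient inequality
  have subgrad : ∀ y v : H, v ∈ A y →
      0 ≤ ⟪y, v⟫ - mintyF A xb ub + ⟪xb, y - xb⟫ + ⟪ub, v - ub⟫ := by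
    intro y v hv
    set K : ℝ := ‖y - xb‖ ^ 2 + ‖v - ub‖ ^ 2 with hK
    have hK0 : 0 ≤ K := by positivity
    set c : ℝ := ⟪y, v⟫ - mintyF A xb ub + ⟪xb, y - xb⟫ + ⟪ub, v - ub⟫ with hc
    have step : ∀ t : ℝ, 0 < t → t ≤ 1 → -(t * K) / 2 ≤ c := by
      intro t ht0 ht1
      have hcb := hcombo t (le_of_lt ht0) ht1 xb ub y v hbdd_bar ⟨_, hbddG hv⟩
      obtain ⟨hb_t, hF_t⟩ := hcb
      rw [hFG hv] at hF_t
      have hmm := hm_le _ _ hb_t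
      -- rewrite the combination as base + t • direction
      have he1 : (1 - t) • xb + t • y = xb + t • (y - xb) := by
        rw [smul_sub, sub_smul, one_smul]; abel
      have he2 : (1 - t) • ub + t • v = ub + t • (v - ub) := by
        rw [smul_sub, sub_smul, one_smul]; abel
      have hq1 : ‖(1 - t) • xb + t • y‖ ^ 2
          = ‖xb‖ ^ 2 + 2 * t * ⟪xb, y - xb⟫ + t ^ 2 * ‖y - xb‖ ^ 2 := by
        rw [he1, norm_add_sq_real, real_inner_smul_right, norm_smul]
        rw [Real.norm_eq_abs, mul_pow, sq_abs]
        ring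
      have hq2 : ‖(1 - t) • ub + t • v‖ ^ 2
          = ‖ub‖ ^ 2 + 2 * t * ⟪ub, v - ub⟫ + t ^ 2 * ‖v - ub‖ ^ 2 := by
        rw [he2, norm_add_sq_real, real_inner_smul_right, norm_smul]
        rw [Real.norm_eq_abs, mul_pow, sq_abs]
        ring
      unfold mintyH mintyQ at hmm
      rw [hq1, hq2] at hmm
      unfold mintyQ at hFbar_le
      have key : 0 ≤ t * c + t ^ 2 * K / 2 := by
        simp only [hc, hK]
        nlinarith [hmm, hF_t, hFbar_le]
      have h2 : 0 ≤ t * (c + t * K / 2) := by nlinarith [key]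
      have h3 : 0 ≤ c + t * K / 2 := by
        by_contra hcon
        push_neg at hcon
        nlinarith
      linarith
    by_contra hneg
    push_neg at hneg
    rcases eq_or_lt_of_le hK0 with hKe | hKp
    · have := step 1 one_pos le_rfl
      rw [← hKe] at this
      simp at this
      linarith
    · obtain ⟨t, htpos, ht1, htK⟩ : ∃ t : ℝ, 0 < t ∧ t ≤ 1 ∧ t * K ≤ -c := by
        refine ⟨min 1 (-c / K), lt_min one_pos (div_pos (by linarith) hKp),
          min_le_left _ _, ?_⟩
        have h1 : min 1 (-c / K) ≤ -c / K := min_le_right _ _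
        calc min 1 (-c / K) * K ≤ (-c / K) * K := mul_le_mul_of_nonneg_right h1 hK0
          _ = -c := by field_simp
      have hst := step t htpos ht1
      clear_value c K
      linarith
  -- the key inequality
  have key : ∀ y v : H, v ∈ A y → ‖xb + ub‖ ^ 2 ≤ ⟪-xb - v, -ub - y⟫ := by
    intro y v hv
    have h1 := subgrad y v hv
    rw [inner_sub_right, inner_sub_right, real_inner_self_eq_norm_sq,
      real_inner_self_eq_norm_sq] at h1
    have h2 : ⟪-xb - v, -ub - y⟫ = ⟪xb, ub⟫ + ⟪xb, y⟫ + ⟪v, ub⟫ + ⟪v, y⟫ := by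
      rw [inner_sub_left, inner_sub_right, inner_sub_right]
      simp only [inner_neg_left, inner_neg_right]
      ring
    have h3 := norm_add_sq_real xb ub
    have h4 : ⟪y, v⟫ = ⟪v, y⟫ := real_inner_comm _ _
    have h5 : ⟪ub, v⟫ = ⟪v, ub⟫ := real_inner_comm _ _
    rw [h2]
    linarith [hFbar_ge]
  have hmem : -xb ∈ A (-ub) := by
    apply hmax
    intro y v hv
    exact le_trans (by positivity) (key y v hv)
  have hfin := key (-ub) (-xb) hmem
  simp only [sub_neg_eq_add, neg_add_cancel, inner_zero_left] at hfin
  have hnz : xb + ub = 0 := by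
    have : ‖xb + ub‖ ^ 2 = 0 := le_antisymm hfin (by positivity)
    have := pow_eq_zero_iff (n := 2) (by norm_num) |>.mp this
    exact norm_eq_zero.mp this
  refine ⟨-ub, -xb, hmem, ?_⟩
  have : -ub + -xb = -(xb + ub) := by abel
  rw [this, hnz, neg_zero]

end MintyAux

theorem minty_theorem
    {H : Type*} [NormedAddCommGroup H] [InnerProductSpace ℝ H] [CompleteSpace H]
    (A : H → Set H) (hA : MonotoneOp A) :
    (∀ x u, (∀ y v, v ∈ A y → 0 ≤ (inner ℝ (u - v) (x - y) : ℝ)) → u ∈ A x) ↔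
      (∀ z : H, ∃ x, ∃ u ∈ A x, x + u = z) := by
  constructor
  · intro hmax z
    set B : H → Set H := fun y => {w | w + z ∈ A y} with hB
    have hBmono : MonotoneOp B := by
      intro x y u v hu hv
      have := hA x y (u + z) (v + z) hu hv
      have he : u + z - (v + z) = u - v := by abel
      rwa [he] at this
    have hBmax : ∀ x u, (∀ y v, v ∈ B y → 0 ≤ (inner ℝ (u - v) (x - y) : ℝ)) → u ∈ B x := by
      intro x u h
      show u + z ∈ A x
      apply hmax x (u + z)
      intro y v hv
      have h1 := h y (v - z) (by show v - z + z ∈ A y; rwa [sub_add_cancel])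
      have he : u - (v - z) = u + z - v := by abel
      rwa [he] at h1
    obtain ⟨x, u, hu, hxu⟩ := minty_zero B hBmono hBmax
    exact ⟨x, u + z, hu, by rw [← add_assoc, hxu, zero_add]⟩
  · intro hsur x u hu'
    obtain ⟨y, v, hv, hyv⟩ := hsur (x + u)
    have h1 := hu' y v hv
    have he : u - v = y - x := by
      have : y + v = x + u := hyv
      have h2 : v = x + u - y := by rw [← this]; abel
      rw [h2]; abel
    rw [he] at h1
    have h3 : (⟪y - x, x - y⟫ : ℝ) = -‖x - y‖ ^ 2 := by
      rw [show y - x = -(x - y) by abel, inner_neg_left, real_inner_self_eq_norm_sq]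
    rw [h3] at h1
    have hxy : x = y := by
      have : ‖x - y‖ ^ 2 = 0 := le_antisymm (by linarith) (by positivity)
      have := pow_eq_zero_iff (n := 2) (by norm_num) |>.mp this
      have := norm_eq_zero.mp this
      exact sub_eq_zero.mp this
    have huv : u = v := by
      have : y + v = x + u := hyv
      rw [← hxy] at this
      exact (add_left_cancel this).symm
    rw [huv, hxy]
    exact hv
end

section
/- If g : H → (-∞, ∞] is a proper lower semicontinuous convex function on a real Hilbert space H, then its subdifferential ∂g is a maximal monotone operator. -/
open Filter Topology

/-- The subdifferential of an extended-real-valued function. -/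
def SubdiffAt {H : Type*} [NormedAddCommGroup H] [InnerProductSpace ℝ H]
    (g : H → EReal) (x : H) : Set H :=
  {u | ∀ y, g x + ((inner ℝ (y - x) u : ℝ) : EReal) ≤ g y}

/-- Convexity for an extended-real-valued function. -/
def EConvex {H : Type*} [NormedAddCommGroup H] [InnerProductSpace ℝ H]
    (g : H → EReal) : Prop :=
  ∀ x y : H, ∀ t : ℝ, 0 ≤ t → t ≤ 1 →
    g (t • x + (1 - t) • y) ≤ ((t : EReal)) * g x + (((1 - t : ℝ) : EReal)) * g y

section Aux

variable {H : Type*} [NormedAddCommGroup H] [InnerProductSpace ℝ H]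

/-- If the subdifferential at `x` is nonempty and `g` is proper, then `g x` is finite. -/
private lemma subdiff_ne_top (g : H → EReal) (hproper : ∃ x, g x ≠ ⊤)
    (x u : H) (hu : u ∈ SubdiffAt g x) : g x ≠ ⊤ := by
  intro htop
  obtain ⟨x₀, hx₀⟩ := hproper
  have := hu x₀
  rw [htop, EReal.top_add_coe] at this
  exact hx₀ (top_le_iff.1 this)

/-- The (real) epigraph of a lower semicontinuous function is closed. -/
private lemma epigraph_closed (g : H → EReal) (hlsc : LowerSemicontinuous g) :
    IsClosed {p : H × ℝ | g p.1 ≤ (p.2 : EReal)} := by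
  have h1 : IsClosed {p : H × EReal | g p.1 ≤ p.2} := hlsc.isClosed_epigraph
  have h2 : Continuous (fun p : H × ℝ => ((p.1, (p.2 : EReal)) : H × EReal)) :=
    continuous_fst.prodMk (continuous_coe_real_ereal.comp continuous_snd)
  exact h1.preimage h2

/-- The (real) epigraph of a convex function is convex. -/
private lemma epigraph_convex (g : H → EReal) (hnbot : ∀ x, g x ≠ ⊥)
    (hconv : EConvex g) :
    Convex ℝ {p : H × ℝ | g p.1 ≤ (p.2 : EReal)} := by
  rintro ⟨x, r⟩ hx ⟨y, s⟩ hy a b ha hb hab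
  simp only [Set.mem_setOf_eq] at hx hy ⊢
  have hb' : b = 1 - a := by linarith
  subst hb'
  have hxt : g x ≠ ⊤ := fun h => by simp [h] at hx
  have hyt : g y ≠ ⊤ := fun h => by simp [h] at hy
  set p := (g x).toReal with hp
  set q := (g y).toReal with hq
  have hpx : ((p : ℝ) : EReal) = g x := EReal.coe_toReal hxt (hnbot x)
  have hqy : ((q : ℝ) : EReal) = g y := EReal.coe_toReal hyt (hnbot y)
  have hpr : p ≤ r := by rw [← EReal.coe_le_coe_iff]; rw [hpx]; exact hx
  have hqs : q ≤ s := by rw [← EReal.coe_le_coe_iff]; rw [hqy]; exact hy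
  calc g (a • x + (1 - a) • y) ≤ (a : EReal) * g x + ((1 - a : ℝ) : EReal) * g y :=
        hconv x y a ha (by linarith)
    _ = ((a * p + (1 - a) * q : ℝ) : EReal) := by
        rw [← hpx, ← hqy, ← EReal.coe_mul, ← EReal.coe_mul, ← EReal.coe_add]
    _ ≤ ((a * r + (1 - a) * s : ℝ) : EReal) := by
        rw [EReal.coe_le_coe_iff]
        have : (0:ℝ) ≤ 1 - a := by linarith
        nlinarith

/-- A proper lsc convex function admits a continuous affine minorant. -/
private lemma affine_minorant (g : H → EReal) (hproper : ∃ x, g x ≠ ⊤)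
    (hnbot : ∀ x, g x ≠ ⊥) (hconv : EConvex g) (hlsc : LowerSemicontinuous g) :
    ∃ (ψ : H →L[ℝ] ℝ) (c : ℝ), ∀ z, ((c + ψ z : ℝ) : EReal) ≤ g z := by
  have hcvx := epigraph_convex g hnbot hconv
  have hcl := epigraph_closed g hlsc
  obtain ⟨x₀, hx₀⟩ := hproper
  set a₀ := (g x₀).toReal with ha₀
  have hax : ((a₀ : ℝ) : EReal) = g x₀ := EReal.coe_toReal hx₀ (hnbot x₀)
  have hpt : (x₀, a₀ - 1) ∉ {p : H × ℝ | g p.1 ≤ (p.2 : EReal)} := by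
    simp only [Set.mem_setOf_eq, ← hax, EReal.coe_le_coe_iff]
    push_neg; linarith
  obtain ⟨f, u, hfu, hS⟩ := geometric_hahn_banach_point_closed hcvx hcl hpt
  set α : ℝ := f (0, 1) with hα
  have hdecomp : ∀ z : H, ∀ t : ℝ, f (z, t) = f (z, 0) + t * α := by
    intro z t
    have : (z, t) = (z, (0:ℝ)) + t • ((0:H), (1:ℝ)) := by
      simp [Prod.ext_iff]
    rw [this, map_add, map_smul]; simp [hα, smul_eq_mul]
  have hmem : ∀ t : ℝ, a₀ ≤ t → u < f (x₀, 0) + t * α := by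
    intro t ht
    have : (x₀, t) ∈ {p : H × ℝ | g p.1 ≤ (p.2 : EReal)} := by
      simp only [Set.mem_setOf_eq, ← hax, EReal.coe_le_coe_iff]; exact ht
    have := hS _ this
    rwa [hdecomp] at this
  have hflt : f (x₀, 0) + (a₀ - 1) * α < u := by
    have := hfu; rwa [hdecomp] at this
  have hαpos : 0 < α := by
    rcases lt_trichotomy α 0 with h | h | h
    · exfalso
      have key := hmem (max a₀ ((u - f (x₀, 0))/α)) (le_max_left _ _)
      have h2 : (u - f (x₀, 0))/α ≤ max a₀ ((u - f (x₀, 0))/α) := le_max_right _ _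
      have h3 : (max a₀ ((u - f (x₀, 0))/α)) * α ≤ u - f (x₀, 0) := by
        rw [div_le_iff_of_neg h] at h2; linarith [h2]
      linarith
    · exfalso
      have := hmem a₀ le_rfl
      rw [h] at this hflt; simp at this hflt; linarith
    · exact h
  refine ⟨(α⁻¹ • (-f)).comp (ContinuousLinearMap.inl ℝ H ℝ), u / α, fun z => ?_⟩
  by_cases hz : g z = ⊤
  · simp [hz]
  · have hzr : (((g z).toReal : ℝ) : EReal) = g z := EReal.coe_toReal hz (hnbot z)
    rw [← hzr, EReal.coe_le_coe_iff]
    have hmz : (z, (g z).toReal) ∈ {p : H × ℝ | g p.1 ≤ (p.2 : EReal)} :=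
      le_of_eq hzr.symm
    have := hS _ hmz
    rw [hdecomp] at this
    have : (u - f (z, 0)) / α < (g z).toReal := by
      rw [div_lt_iff₀ hαpos]; linarith
    simp only [ContinuousLinearMap.comp_apply, ContinuousLinearMap.smul_apply,
      ContinuousLinearMap.neg_apply, ContinuousLinearMap.inl_apply, smul_eq_mul]
    have hne : α ≠ 0 := ne_of_gt hαpos
    have heq : u / α + α⁻¹ * -f (z, 0) = (u - f (z, 0)) / α := by
      field_simp; ring
    rw [heq]; linarith

/-- Existence of the proximal point of a proper lsc convex function. -/
private lemma prox_exists [CompleteSpace H] (g : H → EReal) (hnbot : ∀ x, g x ≠ ⊥)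
    (hconv : EConvex g) (hlsc : LowerSemicontinuous g)
    (ψ : H →L[ℝ] ℝ) (c : ℝ) (hmin : ∀ z, ((c + ψ z : ℝ) : EReal) ≤ g z)
    (x₀ : H) (hx₀ : g x₀ ≠ ⊤) (w : H) :
    ∃ z, g z ≠ ⊤ ∧ ∀ y, g z + ((‖z - w‖^2/2 : ℝ) : EReal) ≤ g y + ((‖y - w‖^2/2 : ℝ) : EReal) := by
  classical
  set F : H → ℝ := fun z => (g z).toReal + ‖z - w‖^2/2 with hF
  set S : Set ℝ := F '' {z | g z ≠ ⊤} with hSdef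
  have hSne : S.Nonempty := ⟨F x₀, x₀, hx₀, rfl⟩
  have hFlb : ∀ z, g z ≠ ⊤ → c + ‖w‖^2/2 - (‖w‖ + ‖ψ‖)^2/2 ≤ F z := by
    intro z hz
    have h1 : c + ψ z ≤ (g z).toReal := by
      have := hmin z
      rw [← EReal.coe_toReal hz (hnbot z), EReal.coe_le_coe_iff] at this
      exact this
    have h2 : |ψ z| ≤ ‖ψ‖ * ‖z‖ := by
      have := ψ.le_opNorm z; calc |ψ z| = ‖ψ z‖ := rfl
        _ ≤ _ := this
    have h3 : |‖z‖ - ‖w‖| ≤ ‖z - w‖ := abs_norm_sub_norm_le z w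
    have h4 : (‖z‖ - ‖w‖)^2 ≤ ‖z - w‖^2 := by
      rw [← sq_abs (‖z‖ - ‖w‖)]
      exact pow_le_pow_left₀ (abs_nonneg _) h3 2
    have h5 : 0 ≤ ‖ψ‖ := norm_nonneg _
    simp only [hF]
    nlinarith [sq_nonneg (‖z‖ - ‖w‖ - ‖ψ‖), abs_le.1 h2, norm_nonneg z, norm_nonneg w]
  have hSbdd : BddBelow S := by
    refine ⟨c + ‖w‖^2/2 - (‖w‖ + ‖ψ‖)^2/2, ?_⟩
    rintro r ⟨z, hz, rfl⟩; exact hFlb z hz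
  set d : ℝ := sInf S with hd
  have hdle : ∀ z, g z ≠ ⊤ → d ≤ F z := fun z hz => csInf_le hSbdd ⟨z, hz, rfl⟩
  have hseq : ∀ n : ℕ, ∃ z, g z ≠ ⊤ ∧ F z < d + 1/(n+1) := by
    intro n
    have hpos : (0:ℝ) < 1/(n+1) := by positivity
    obtain ⟨r, ⟨z, hz, rfl⟩, hr⟩ := exists_lt_of_csInf_lt hSne (by linarith : d < d + 1/(n+1))
    exact ⟨z, hz, hr⟩
  choose zs hzsD hzsF using hseq
  have key : ∀ z₁ z₂, g z₁ ≠ ⊤ → g z₂ ≠ ⊤ →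
      d + ‖z₁ - z₂‖^2/8 ≤ F z₁/2 + F z₂/2 := by
    intro z₁ z₂ h₁ h₂
    set m := (1/2 : ℝ) • z₁ + (1 - (1/2:ℝ)) • z₂ with hm
    have hc := hconv z₁ z₂ (1/2) (by norm_num) (by norm_num)
    have ha₁ : ((((g z₁).toReal : ℝ)) : EReal) = g z₁ := EReal.coe_toReal h₁ (hnbot z₁)
    have ha₂ : ((((g z₂).toReal : ℝ)) : EReal) = g z₂ := EReal.coe_toReal h₂ (hnbot z₂)
    have hc' : g m ≤ (((1/2) * (g z₁).toReal + (1/2) * (g z₂).toReal : ℝ) : EReal) := by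
      rw [hm]
      calc g ((1/2 : ℝ) • z₁ + (1 - (1/2:ℝ)) • z₂)
          ≤ (((1/2:ℝ)) : EReal) * g z₁ + (((1 - (1/2:ℝ) : ℝ)) : EReal) * g z₂ := hc
        _ = (((1/2) * (g z₁).toReal + (1/2) * (g z₂).toReal : ℝ) : EReal) := by
            rw [← ha₁, ← ha₂, ← EReal.coe_mul, ← EReal.coe_mul, ← EReal.coe_add]; norm_num
    have hmtop : g m ≠ ⊤ := ne_top_of_le_ne_top (EReal.coe_ne_top _) hc'
    have hmr : (g m).toReal ≤ (1/2) * (g z₁).toReal + (1/2) * (g z₂).toReal := by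
      rw [← EReal.coe_le_coe_iff, EReal.coe_toReal hmtop (hnbot m)]; exact hc'
    have hdm := hdle m hmtop
    have hmw : m - w = (1/2 : ℝ) • (z₁ - w) + (1/2 : ℝ) • (z₂ - w) := by
      rw [hm]; module
    have e1 : ‖m - w‖^2 = (1/4)*‖z₁ - w‖^2 + (1/2)*(inner ℝ (z₁ - w) (z₂ - w) : ℝ)
        + (1/4)*‖z₂ - w‖^2 := by
      rw [hmw, norm_add_sq_real]
      rw [norm_smul, norm_smul, real_inner_smul_left, real_inner_smul_right]
      simp [mul_pow]
      norm_num
    have e2 : ‖z₁ - z₂‖^2 = ‖z₁ - w‖^2 - 2*(inner ℝ (z₁ - w) (z₂ - w) : ℝ) + ‖z₂ - w‖^2 := by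
      have : z₁ - z₂ = (z₁ - w) - (z₂ - w) := by abel
      rw [this, norm_sub_sq_real]
      try ring
    simp only [hF] at hdm ⊢
    nlinarith [hdm, hmr, e1, e2]
  have hCauchy : CauchySeq zs := by
    rw [Metric.cauchySeq_iff]
    intro ε hε
    obtain ⟨N, hN⟩ := exists_nat_gt (8/ε^2)
    refine ⟨N, fun n hn m hm => ?_⟩
    have h1 : (1:ℝ)/(n+1) ≤ 1/(N+1) := by
      apply one_div_le_one_div_of_le (by positivity)
      exact_mod_cast by omega
    have h2 : (1:ℝ)/(m+1) ≤ 1/(N+1) := by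
      apply one_div_le_one_div_of_le (by positivity)
      exact_mod_cast by omega
    have hk := key (zs n) (zs m) (hzsD n) (hzsD m)
    have hsq : ‖zs n - zs m‖^2 < ε^2 := by
      have h8 : 8/(ε^2) < (N:ℝ) + 1 := by
        calc (8:ℝ)/ε^2 < N := hN
          _ ≤ N + 1 := by linarith
      have h9 : (8:ℝ)/((N:ℝ)+1) < ε^2 := by
        rw [div_lt_iff₀ (by positivity)] at h8 ⊢
        nlinarith [sq_nonneg ε, hε]
      have := hzsF n; have := hzsF m
      have h10 : 8 * (1/((N:ℝ)+1)) = 8/((N:ℝ)+1) := by ring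
      linarith [h1, h2, hk, h9, h10, hzsF n, hzsF m]
    rw [dist_eq_norm]
    exact lt_of_pow_lt_pow_left₀ 2 (le_of_lt hε) hsq
  obtain ⟨z, hz⟩ := cauchySeq_tendsto_of_complete hCauchy
  have hFd : Tendsto (fun n => F (zs n)) atTop (𝓝 d) := by
    refine tendsto_of_tendsto_of_tendsto_of_le_of_le
      (tendsto_const_nhds) ?_ (fun n => hdle _ (hzsD n)) (fun n => le_of_lt (hzsF n))
    have : Tendsto (fun n : ℕ => d + 1/((n:ℝ)+1)) atTop (𝓝 (d + 0)) :=
      tendsto_const_nhds.add tendsto_one_div_add_atTop_nhds_zero_nat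
    simpa using this
  have hnorm : Tendsto (fun n => ‖zs n - w‖^2/2) atTop (𝓝 (‖z - w‖^2/2)) := by
    have h1 : Continuous (fun y : H => ‖y - w‖^2/2) :=
      ((continuous_norm.comp (continuous_id.sub continuous_const)).pow 2).div_const 2
    exact (h1.tendsto z).comp hz
  have htr : Tendsto (fun n => (g (zs n)).toReal) atTop (𝓝 (d - ‖z - w‖^2/2)) := by
    have : (fun n => (g (zs n)).toReal) = fun n => F (zs n) - ‖zs n - w‖^2/2 := by
      funext n; simp [hF]
    rw [this]
    simpa using hFd.sub hnorm
  set y₀ : ℝ := d - ‖z - w‖^2/2 with hy₀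
  have hgseq : Tendsto (fun n => g (zs n)) atTop (𝓝 ((y₀ : ℝ) : EReal)) := by
    have : (fun n => g (zs n)) = fun n => (((g (zs n)).toReal : ℝ) : EReal) := by
      funext n; rw [EReal.coe_toReal (hzsD n) (hnbot _)]
    rw [this]
    exact (continuous_coe_real_ereal.tendsto y₀).comp htr
  have hgz : g z ≤ ((y₀ : ℝ) : EReal) := by
    calc g z ≤ liminf g (𝓝 z) := lowerSemicontinuous_iff_le_liminf.1 hlsc z
      _ ≤ liminf g (map zs atTop) := liminf_le_liminf_of_le hz
      _ = liminf (fun n => g (zs n)) atTop := (Filter.liminf_comp _ _ _).symm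
      _ = ((y₀ : ℝ) : EReal) := hgseq.liminf_eq
  have hztop : g z ≠ ⊤ := ne_top_of_le_ne_top (EReal.coe_ne_top _) hgz
  refine ⟨z, hztop, fun y => ?_⟩
  have hzd : g z + ((‖z - w‖^2/2 : ℝ) : EReal) ≤ ((d : ℝ) : EReal) := by
    calc g z + ((‖z - w‖^2/2 : ℝ) : EReal) ≤ ((y₀:ℝ):EReal) + ((‖z - w‖^2/2 : ℝ) : EReal) :=
        add_le_add hgz le_rfl
      _ = ((y₀ + ‖z - w‖^2/2 : ℝ) : EReal) := by rw [← EReal.coe_add]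
      _ = ((d : ℝ) : EReal) := by rw [hy₀]; norm_num
  refine le_trans hzd ?_
  by_cases hy : g y = ⊤
  · rw [hy, EReal.top_add_coe]; exact le_top
  · rw [← EReal.coe_toReal hy (hnbot y), ← EReal.coe_add, EReal.coe_le_coe_iff]
    exact hdle y hy

/-- The proximal point yields a subgradient. -/
private lemma prox_subgrad (g : H → EReal) (hnbot : ∀ x, g x ≠ ⊥)
    (hconv : EConvex g) (w z : H) (hz : g z ≠ ⊤)
    (hmin : ∀ y, g z + ((‖z - w‖^2/2 : ℝ) : EReal) ≤ g y + ((‖y - w‖^2/2 : ℝ) : EReal)) :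
    w - z ∈ SubdiffAt g z := by
  intro y
  by_cases hy : g y = ⊤
  · rw [hy]; exact le_top
  · set a := (g z).toReal with ha
    set b := (g y).toReal with hb
    have haz : ((a:ℝ):EReal) = g z := EReal.coe_toReal hz (hnbot z)
    have hby : ((b:ℝ):EReal) = g y := EReal.coe_toReal hy (hnbot y)
    rw [← haz, ← hby, ← EReal.coe_add, EReal.coe_le_coe_iff]
    set C : ℝ := ‖y - z‖^2/2 with hC
    have hC0 : 0 ≤ C := by positivity
    have hkey : ∀ t : ℝ, 0 < t → t ≤ 1 →
        a + (inner ℝ (y - z) (w - z) : ℝ) ≤ b + t * C := by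
      intro t ht ht1
      set zt := t • y + (1 - t) • z with hzt
      have hc := hconv y z t (le_of_lt ht) ht1
      have hc' : g zt ≤ ((t * b + (1 - t) * a : ℝ) : EReal) := by
        calc g zt ≤ ((t : EReal)) * g y + (((1 - t : ℝ) : EReal)) * g z := hc
          _ = ((t * b + (1 - t) * a : ℝ) : EReal) := by
              rw [← haz, ← hby, ← EReal.coe_mul, ← EReal.coe_mul, ← EReal.coe_add]
      have hzttop : g zt ≠ ⊤ := ne_top_of_le_ne_top (EReal.coe_ne_top _) hc'
      have hztr : (g zt).toReal ≤ t * b + (1 - t) * a := by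
        rw [← EReal.coe_le_coe_iff, EReal.coe_toReal hzttop (hnbot zt)]; exact hc'
      have hm := hmin zt
      rw [← haz, ← EReal.coe_toReal hzttop (hnbot zt), ← EReal.coe_add, ← EReal.coe_add,
        EReal.coe_le_coe_iff] at hm
      have hztw : zt - w = (z - w) + t • (y - z) := by rw [hzt]; module
      have e1 : ‖zt - w‖^2 = ‖z - w‖^2 + 2 * (t * (inner ℝ (z - w) (y - z) : ℝ))
          + t^2 * ‖y - z‖^2 := by
        rw [hztw, norm_add_sq_real, real_inner_smul_right, norm_smul]
        simp [mul_pow]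
        try ring_nf
      have hip : (inner ℝ (z - w) (y - z) : ℝ) = -(inner ℝ (y - z) (w - z) : ℝ) := by
        rw [show z - w = -(w - z) by abel, inner_neg_left, real_inner_comm]
      have hstep : t * a ≤ t * b + t * (inner ℝ (z - w) (y - z) : ℝ) + t^2 * C := by
        nlinarith [hm, hztr, e1]
      have hdiv : a ≤ b + (inner ℝ (z - w) (y - z) : ℝ) + t * C := by
        have := (mul_le_mul_iff_of_pos_left ht).1 (by nlinarith [hstep] :
          t * a ≤ t * (b + (inner ℝ (z - w) (y - z) : ℝ) + t * C))
        exact this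
      rw [hip] at hdiv; linarith
    have : ∀ ε : ℝ, 0 < ε → a + (inner ℝ (y - z) (w - z) : ℝ) ≤ b + ε := by
      intro ε hε
      have htpos : 0 < min 1 (ε/(C+1)) := lt_min one_pos (by positivity)
      have ht1 : min 1 (ε/(C+1)) ≤ 1 := min_le_left _ _
      have h := hkey _ htpos ht1
      have h2 : min 1 (ε/(C+1)) * C ≤ ε := by
        have h3 : min 1 (ε/(C+1)) ≤ ε/(C+1) := min_le_right _ _
        have h4 : min 1 (ε/(C+1)) * C ≤ (ε/(C+1)) * C :=
          mul_le_mul_of_nonneg_right h3 hC0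
        have h5 : (ε/(C+1)) * C ≤ ε := by
          rw [div_mul_eq_mul_div, div_le_iff₀ (by linarith)]
          nlinarith
        linarith
      linarith
    exact le_of_forall_pos_le_add this

end Aux

theorem subdifferential_maximal_monotone
    {H : Type*} [NormedAddCommGroup H] [InnerProductSpace ℝ H] [CompleteSpace H]
    (g : H → EReal) (hproper : ∃ x, g x ≠ ⊤) (hnbot : ∀ x, g x ≠ ⊥)
    (hconv : EConvex g) (hlsc : LowerSemicontinuous g) :
    (∀ x y u v, u ∈ SubdiffAt g x → v ∈ SubdiffAt g y →
        0 ≤ (inner ℝ (u - v) (x - y) : ℝ)) ∧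
    (∀ x u, (∀ y v, v ∈ SubdiffAt g y → 0 ≤ (inner ℝ (u - v) (x - y) : ℝ)) →
        u ∈ SubdiffAt g x) := by
  constructor
  · -- monotonicity
    intro x y u v hu hv
    have hxt : g x ≠ ⊤ := subdiff_ne_top g hproper x u hu
    have hyt : g y ≠ ⊤ := subdiff_ne_top g hproper y v hv
    set a := (g x).toReal with hadef
    set b := (g y).toReal with hbdef
    have hax : ((a:ℝ):EReal) = g x := EReal.coe_toReal hxt (hnbot x)
    have hby : ((b:ℝ):EReal) = g y := EReal.coe_toReal hyt (hnbot y)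
    have h1 : a + (inner ℝ (y - x) u : ℝ) ≤ b := by
      have := hu y
      rw [← hax, ← hby, ← EReal.coe_add, EReal.coe_le_coe_iff] at this
      exact this
    have h2 : b + (inner ℝ (x - y) v : ℝ) ≤ a := by
      have := hv x
      rw [← hax, ← hby, ← EReal.coe_add, EReal.coe_le_coe_iff] at this
      exact this
    have e1 : (inner ℝ (u - v) (x - y) : ℝ)
        = -(inner ℝ (y - x) u : ℝ) - (inner ℝ (x - y) v : ℝ) := by
      rw [inner_sub_left, real_inner_comm (x - y) u, real_inner_comm (x - y) v,
        show x - y = -(y - x) by abel, inner_neg_left, inner_neg_left]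
    rw [e1]; linarith
  · -- maximality
    intro x u hyp
    obtain ⟨ψ, c, hmin⟩ := affine_minorant g hproper hnbot hconv hlsc
    obtain ⟨x₀, hx₀⟩ := hproper
    obtain ⟨z, hztop, hzmin⟩ := prox_exists g hnbot hconv hlsc ψ c hmin x₀ hx₀ (x + u)
    have hv : (x + u) - z ∈ SubdiffAt g z :=
      prox_subgrad g hnbot hconv (x + u) z hztop hzmin
    have h0 := hyp z ((x + u) - z) hv
    have e1 : u - ((x + u) - z) = z - x := by abel
    rw [e1] at h0
    have e2 : (inner ℝ (z - x) (x - z) : ℝ) = -(inner ℝ (z - x) (z - x) : ℝ) := by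
      rw [show x - z = -(z - x) by abel, inner_neg_right]
    rw [e2] at h0
    have h3 : (inner ℝ (z - x) (z - x) : ℝ) = 0 :=
      le_antisymm (by linarith) real_inner_self_nonneg
    have h4 : z - x = 0 := by
      rwa [inner_self_eq_zero] at h3
    have h5 : z = x := by
      rwa [sub_eq_zero] at h4
    have h6 : (x + u) - z = u := by rw [h5]; abel
    rw [h6] at hv
    rw [h5] at hv
    exact hv
end
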